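/- For every linear block code B of length n over R = Z8 + uZ8 (an R-submodule of Rⁿ), there exists an injective map Φ : Rⁿ → F2^{32n}, obtained by applying coordinatewise a map φ₅ : R → F2^{32}, such that for every codeword c ∈ B the Hamming weight of Φ(c) equals the homogeneous weight of c with Γ = 16 (extended coordinatewise); in particular Φ(B) is a binary block code of length 32n with |Φ(B)| = |B|. -/
import Mathlib


instance : DecidableEq (DualNumber (ZMod 8)) :=
  inferInstanceAs (DecidableEq (ZMod 8 × ZMod 8))

/-- The homogeneous weight on `Z₈ + uZ₈` with average value `Γ = 16`, as a natural
number: `w 0 = 0`, `w (4u) = 32`, and `w x = 16` otherwise. -/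
def whom8 (x : DualNumber (ZMod 8)) : ℕ :=
  if x = 0 then 0 else if x = 4 * DualNumber.eps then 32 else 16

instance : Fintype (DualNumber (ZMod 8)) :=
  inferInstanceAs (Fintype (ZMod 8 × ZMod 8))

/-- The coordinatewise map `φ₅ : R → F₂³²`. -/
def phi5fun (x : DualNumber (ZMod 8)) : Fin 32 → ZMod 2 :=
  if x = 0 then 0
  else if x = 4 * DualNumber.eps then 1
  else fun j =>
    let v : ℕ := x.fst.val + 8 * x.snd.val
    let k : ℕ := if v = 32 then 63 else if v = 63 then 32 else v
    if (j : ℕ) < 6 then (if k.testBit j then 1 else 0)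
    else if (j : ℕ) < 6 + (16 - ((List.range 6).filter k.testBit).length) then 1 else 0

set_option maxRecDepth 10000 in
lemma phi5fun_norm : ∀ x, hammingNorm (phi5fun x) = whom8 x := by decide

set_option maxRecDepth 10000 in
lemma phi5fun_inj : Function.Injective phi5fun := by decide

/-- For every linear block code `B` of length `n` over `Z₈ + uZ₈`, there is an injective
map `Φ : Rⁿ → F₂^{32n}`, given coordinatewise by a map `φ₅ : R → F₂³²`, such that the
Hamming weight of `Φ c` equals the (coordinatewise extended) homogeneous weight of `c`
with `Γ = 16` for every codeword `c ∈ B`; in particular `|Φ(B)| = |B|`. -/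
theorem phi5_code_image (n : ℕ)
    (B : Submodule (DualNumber (ZMod 8)) (Fin n → DualNumber (ZMod 8))) :
    ∃ phi5 : DualNumber (ZMod 8) → (Fin 32 → ZMod 2),
      Function.Injective (fun (v : Fin n → DualNumber (ZMod 8)) =>
        (fun p : Fin n × Fin 32 => phi5 (v p.1) p.2)) ∧
      (∀ c ∈ B, hammingNorm (fun p : Fin n × Fin 32 => phi5 (c p.1) p.2) =
        ∑ i : Fin n, whom8 (c i)) ∧
      Nat.card ((fun (v : Fin n → DualNumber (ZMod 8)) =>
          (fun p : Fin n × Fin 32 => phi5 (v p.1) p.2)) ''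
          (B : Set (Fin n → DualNumber (ZMod 8)))) = Nat.card B := by
  refine ⟨phi5fun, ?_, ?_, ?_⟩
  case _ =>
    intro v w h
    funext i
    apply phi5fun_inj
    funext j
    exact congrFun h (i, j)
  case _ =>
    intro c _
    have h1 : ∀ i, hammingNorm (phi5fun (c i)) = whom8 (c i) := fun i => phi5fun_norm _
    calc hammingNorm (fun p : Fin n × Fin 32 => phi5fun (c p.1) p.2)
        = ∑ i : Fin n, hammingNorm (phi5fun (c i)) := by
          simp [hammingNorm, Finset.card_filter, Fintype.sum_prod_type]
      _ = ∑ i : Fin n, whom8 (c i) := by simp [h1]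
  case _ =>
    have hinj : Function.Injective (fun (v : Fin n → DualNumber (ZMod 8)) =>
        (fun p : Fin n × Fin 32 => phi5fun (v p.1) p.2)) := by
      intro v w h
      funext i
      apply phi5fun_inj
      funext j
      exact congrFun h (i, j)
    exact Nat.card_image_of_injective hinj _
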